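/- arXiv:1210.6475 — 2 statements merged into one kernel-verified Lean document; each statement's English description precedes it below -/
import Mathlib

section
/- Let c < b be real numbers, let V : ℝ → ℝ be Lebesgue integrable and vanish outside [a,b] (with c ≤ a < b), let C > 0, and let K : ℝ × ℝ → ℂ be such that for each x ∈ [c,b] the map t ↦ K(t,x) is measurable and |K(t,x)| ≤ C whenever c ≤ x ≤ t ≤ b. Define functions bₙ on [c,b] by b₀(x) = 1 and b_{n+1}(x) = −∫_x^b K(t,x)·V(t)·bₙ(t) dt. Then for every n ∈ ℕ and every x ∈ [c,b], |bₙ(x)| ≤ (C·∫_x^b |V(t)| dt)ⁿ/n!. -/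
/-!
Induction on `n`. Writing `F t = ∫ s in t..b, |V s|`, the bounds `‖K‖ ≤ C` and the induction
hypothesis reduce the step to the identity
`∫ t in x..b, |V t| * F t ^ n = F x ^ (n + 1) / (n + 1)`.
This is the fundamental theorem of calculus for the absolutely continuous function
`F ^ (n + 1)`, whose derivative is `-(n + 1) * |V| * F ^ n` almost everywhere by Lebesgue's
differentiation theorem.
-/

open MeasureTheory intervalIntegral

theorem AbsolutelyContinuousOnInterval.fun_pow {f : ℝ → ℝ} {a b : ℝ}
    (hf : AbsolutelyContinuousOnInterval f a b) (n : ℕ) :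
    AbsolutelyContinuousOnInterval (fun x => f x ^ n) a b := by
  induction n with
  | zero => simpa using (contDiffOn_const (c := (1 : ℝ))).absolutelyContinuousOnInterval
  | succ n ih => simpa only [pow_succ] using ih.fun_mul hf

theorem IntervalIntegrable.absolutelyContinuousOnInterval_intervalIntegral_left
    {W : ℝ → ℝ} {a b : ℝ}
    (hW : IntervalIntegrable W volume a b) :
    AbsolutelyContinuousOnInterval (fun t => ∫ s in t..b, W s) a b := by
  simpa only [integral_symm b] using
    (hW.absolutelyContinuousOnInterval_intervalIntegral Set.right_mem_uIcc).fun_neg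

theorem IntervalIntegrable.ae_hasDerivAt_integral_left {W : ℝ → ℝ} {a b : ℝ}
    (hW : IntervalIntegrable W volume a b) :
    ∀ᵐ t, t ∈ Set.uIcc a b → HasDerivAt (fun t => ∫ s in t..b, W s) (-W t) t := by
  filter_upwards [hW.ae_hasDerivAt_integral] with t ht htab
  simpa only [integral_symm b] using (ht htab b Set.right_mem_uIcc).fun_neg

theorem integral_mul_integral_pow_eq {W : ℝ → ℝ} {a b : ℝ}
    (hW : IntervalIntegrable W volume a b) (n : ℕ) :
    ∫ t in a..b, W t * (∫ s in t..b, W s) ^ n = (∫ s in a..b, W s) ^ (n + 1) / (n + 1) := by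
  have hFTC :=
    (hW.absolutelyContinuousOnInterval_intervalIntegral_left.fun_pow (n + 1)).integral_deriv_eq_sub
  have hderiv : ∫ t in a..b, deriv (fun t => (∫ s in t..b, W s) ^ (n + 1)) t
      = ∫ t in a..b, -((n + 1) * (W t * (∫ s in t..b, W s) ^ n)) := by
    refine integral_congr_ae ?_
    filter_upwards [hW.ae_hasDerivAt_integral_left] with t hF ht
    rw [((hF (Set.uIoc_subset_uIcc ht)).fun_pow (n + 1)).deriv]
    push_cast
    ring
  rw [hderiv, intervalIntegral.integral_neg, intervalIntegral.integral_const_mul, integral_same,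
    zero_pow n.succ_ne_zero, zero_sub] at hFTC
  field_simp
  linarith

theorem statement2_general
    (b c : ℝ)
    (V : ℝ → ℝ) (hV : Integrable V)
    (C : ℝ) (hC : 0 < C)
    (K : ℝ × ℝ → ℂ)
    (hKbound : ∀ x t : ℝ, c ≤ x → x ≤ t → t ≤ b → ‖K (t, x)‖ ≤ C)
    (B : ℕ → ℝ → ℂ)
    (hB0 : ∀ x, B 0 x = 1)
    (hBrec : ∀ n : ℕ, ∀ x, B (n + 1) x = -∫ t in x..b, K (t, x) * (V t : ℂ) * B n t) :
    ∀ n : ℕ, ∀ x ∈ Set.Icc c b,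
      ‖B n x‖ ≤ (C * ∫ t in x..b, |V t|) ^ n / n.factorial := by
  intro n
  induction n with
  | zero => simp [hB0]
  | succ n ih =>
    rintro x ⟨hcx, hxb⟩
    have hW : IntervalIntegrable (fun t => |V t|) volume x b := hV.abs.intervalIntegrable
    have hbound : IntervalIntegrable
        (fun t => C * |V t| * ((C * ∫ s in t..b, |V s|) ^ n / n.factorial)) volume x b :=
      (hW.const_mul C).mul_continuousOn
        ((hW.absolutelyContinuousOnInterval_intervalIntegral_left.continuousOn.const_smul C).pow n
          |>.div_const _)
    rw [hBrec, norm_neg]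
    calc ‖∫ t in x..b, K (t, x) * (V t : ℂ) * B n t‖
        ≤ ∫ t in x..b, C * |V t| * ((C * ∫ s in t..b, |V s|) ^ n / n.factorial) := by
          -- no integrability of the integrand is needed: the bound also holds for the junk value 0
          refine norm_integral_le_of_norm_le hxb (ae_of_all _ fun t ht => ?_) hbound
          rw [norm_mul, norm_mul, Complex.norm_real, Real.norm_eq_abs]
          gcongr
          · exact hKbound x t hcx ht.1.le ht.2
          · exact ih t ⟨hcx.trans ht.1.le, ht.2⟩
      _ = C ^ (n + 1) / n.factorial * ∫ t in x..b, |V t| * (∫ s in t..b, |V s|) ^ n := by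
          rw [← intervalIntegral.integral_const_mul]
          congr 1 with t
          ring
      _ = (C * ∫ t in x..b, |V t|) ^ (n + 1) / (n + 1).factorial := by
          rw [integral_mul_integral_pow_eq hW, Nat.factorial_succ]
          push_cast
          field_simp
          ring

/-- A Gronwall-type bound for the Picard iterates of a Volterra
equation with a bounded kernel and an integrable potential supported in `[a,b]`. -/
theorem statement2
    (a b c : ℝ) (hcb : c < b) (hca : c ≤ a) (hab : a < b)
    (V : ℝ → ℝ) (hV : Integrable V)
    (hVsupp : ∀ x, x ∉ Set.Icc a b → V x = 0)
    (C : ℝ) (hC : 0 < C)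
    (K : ℝ × ℝ → ℂ)
    (hKmeas : ∀ x ∈ Set.Icc c b, Measurable fun t => K (t, x))
    (hKbound : ∀ x t : ℝ, c ≤ x → x ≤ t → t ≤ b → ‖K (t, x)‖ ≤ C)
    (B : ℕ → ℝ → ℂ)
    (hB0 : ∀ x, B 0 x = 1)
    (hBrec : ∀ n : ℕ, ∀ x, B (n + 1) x = -∫ t in x..b, K (t, x) * (V t : ℂ) * B n t) :
    ∀ n : ℕ, ∀ x ∈ Set.Icc c b,
      ‖B n x‖ ≤ (C * ∫ t in x..b, |V t|) ^ n / n.factorial :=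
  statement2_general b c V hV C hC K hKbound B hB0 hBrec
end

section
/- For every ζ ∈ Ū with ζ ≠ 0, the unique continuous solution b(·,ζ) of the Jost integral equation at ζ satisfies |b(a,ζ) − 1| ≤ (‖V‖₁/|ζ|)·exp((b − a)·‖V‖₁). In particular b(a,ζ) → 1 as |ζ| → ∞ with ζ ∈ Ū. -/
/-!
Both estimates come from two bounds on the kernel for `s ≥ 0` and `Im ζ ≥ 0`, where
`|e^{2iζs}| ≤ 1`: `‖κ_ζ(s)‖ ≤ s` (mean value inequality) and `‖κ_ζ(s)‖ ≤ 1/|ζ|`.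
The first turns the Jost equation into `|b(x)| ≤ 1 + (b - a) ∫_x^b |V| |b|`, so Grönwall's
inequality bounds `|b|` by `exp((b - a)‖V‖₁)` on `[a, b]`; the second then bounds
`|b(a) - 1| = |∫_a^b κ_ζ(t - a) V(t) b(t) dt|` by `‖V‖₁ exp((b - a)‖V‖₁) / |ζ|`.
For Grönwall with a merely integrable weight `g`, the function `(1 + c R) e^{-c W}` with
`R(y) = ∫_y^b g u` and `W(y) = ∫_y^b g` is absolutely continuous with a.e. nonnegative
derivative, so by the fundamental theorem of calculus it is at most its value `1` at `b`.
-/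

open MeasureTheory intervalIntegral Filter

/-- The kernel `κ_ζ(s) = (e^{2iζs} − 1)/(2iζ)` for `ζ ≠ 0`, and `κ₀(s) = s`. -/
noncomputable def kappa (ζ : ℂ) (s : ℝ) : ℂ :=
  if ζ = 0 then (s : ℂ)
  else (Complex.exp (2 * Complex.I * ζ * s) - 1) / (2 * Complex.I * ζ)

open Set Complex

theorem LocallyLipschitz.comp_absolutelyContinuousOnInterval {F Y : Type*}
    [SeminormedAddCommGroup F] [PseudoMetricSpace Y] {φ : F → Y} {f : ℝ → F} {a b : ℝ}
    (hφ : LocallyLipschitz φ) (hf : AbsolutelyContinuousOnInterval f a b) :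
    AbsolutelyContinuousOnInterval (φ ∘ f) a b := by
  obtain ⟨K, hK⟩ := hφ.locallyLipschitzOn.exists_lipschitzOnWith_of_compact
    (isCompact_uIcc.image_of_continuousOn hf.continuousOn)
  have hKf := Tendsto.const_mul (K : ℝ) hf
  rw [mul_zero] at hKf
  refine squeeze_zero' (Eventually.of_forall fun _ => Finset.sum_nonneg fun _ _ => dist_nonneg)
    ?_ hKf
  filter_upwards [mem_inf_of_right (mem_principal_self _)] with E hE
  rw [Finset.mul_sum]
  gcongr with i hi
  exact hK.dist_le_mul _ (mem_image_of_mem f (hE.1 i hi).1) _ (mem_image_of_mem f (hE.1 i hi).2)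

theorem le_exp_mul_integral_of_le_one_add_mul_integral {g u : ℝ → ℝ} {c x b : ℝ}
    (hxb : x ≤ b) (hc : 0 ≤ c) (hg : IntervalIntegrable g volume x b)
    (hgu : IntervalIntegrable (fun t => g t * u t) volume x b) (hg0 : ∀ t ∈ Icc x b, 0 ≤ g t)
    (h : ∀ y ∈ Icc x b, u y ≤ 1 + c * ∫ t in y..b, g t * u t) :
    u x ≤ Real.exp (c * ∫ t in x..b, g t) := by
  set W : ℝ → ℝ := fun y => ∫ t in y..b, g t
  set R : ℝ → ℝ := fun y => ∫ t in y..b, g t * u t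
  set Q : ℝ → ℝ := fun y => (1 + c * R y) * Real.exp (-(c * W y))
  have hb : b ∈ uIcc x b := right_mem_uIcc
  have hWac : AbsolutelyContinuousOnInterval W x b := by
    simpa only [W, integral_symm b] using
      (hg.absolutelyContinuousOnInterval_intervalIntegral hb).fun_neg
  have hRac : AbsolutelyContinuousOnInterval R x b := by
    simpa only [R, integral_symm b] using
      (hgu.absolutelyContinuousOnInterval_intervalIntegral hb).fun_neg
  have hQac : AbsolutelyContinuousOnInterval Q x b := by
    have h1 : AbsolutelyContinuousOnInterval (fun y => 1 + c * R y) x b :=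
      (by fun_prop : ContDiff ℝ 1 fun r : ℝ => 1 + c * r).locallyLipschitz
        |>.comp_absolutelyContinuousOnInterval hRac
    have h2 : AbsolutelyContinuousOnInterval (fun y => Real.exp (-(c * W y))) x b :=
      (by fun_prop : ContDiff ℝ 1 fun r : ℝ => Real.exp (-(c * r))).locallyLipschitz
        |>.comp_absolutelyContinuousOnInterval hWac
    exact h1.fun_mul h2
  have hQ' : ∀ᵐ t ∂volume.restrict (Icc x b), 0 ≤ deriv Q t := by
    rw [← uIcc_of_le hxb, ae_restrict_iff' measurableSet_uIcc]
    filter_upwards [hg.ae_hasDerivAt_integral, hgu.ae_hasDerivAt_integral] with t hW' hR' ht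
    have hWt : HasDerivAt W (-g t) t := by
      simpa only [W, integral_symm b] using (hW' ht b hb).fun_neg
    have hRt : HasDerivAt R (-(g t * u t)) t := by
      simpa only [R, integral_symm b] using (hR' ht b hb).fun_neg
    rw [uIcc_of_le hxb] at ht
    have hQt : HasDerivAt Q _ t :=
      ((hRt.const_mul c).const_add 1).mul (hWt.const_mul c).fun_neg.exp
    rw [hQt.deriv]
    have : 0 ≤ c * g t * (1 + c * R t - u t) * Real.exp (-(c * W t)) := by
      have := hg0 t ht
      have := sub_nonneg.2 (h t ht)
      positivity
    linarith
  have hQ : Q x ≤ 1 := by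
    have hQb : Q b = 1 := by simp [Q, R, W]
    linarith [hQac.integral_deriv_eq_sub, integral_nonneg_of_ae_restrict hxb hQ']
  calc u x ≤ 1 + c * R x := h x (left_mem_Icc.2 hxb)
    _ = Q x * Real.exp (c * W x) := by
        simp only [Q, mul_assoc, ← Real.exp_add, neg_add_cancel, Real.exp_zero, mul_one]
    _ ≤ Real.exp (c * W x) := mul_le_of_le_one_left (Real.exp_pos _).le hQ

lemma norm_exp_two_mul_I_mul_le_one {ζ : ℂ} (hζ : 0 ≤ ζ.im) {s : ℝ} (hs : 0 ≤ s) :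
    ‖exp (2 * I * ζ * s)‖ ≤ 1 := by
  rw [norm_exp, Real.exp_le_one_iff]
  simpa [mul_re, mul_assoc] using mul_nonneg zero_le_two (mul_nonneg hζ hs)

lemma norm_two_mul_I_mul (ζ : ℂ) : ‖2 * I * ζ‖ = 2 * ‖ζ‖ := by simp

lemma norm_kappa_le_inv_norm {ζ : ℂ} (hζ : 0 ≤ ζ.im) (hne : ζ ≠ 0) {s : ℝ} (hs : 0 ≤ s) :
    ‖kappa ζ s‖ ≤ ‖ζ‖⁻¹ := by
  rw [kappa, if_neg hne, norm_div, norm_two_mul_I_mul, div_le_iff₀ (by positivity),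
    mul_left_comm, inv_mul_cancel₀ (norm_ne_zero_iff.2 hne), mul_one]
  calc ‖exp (2 * I * ζ * s) - 1‖ ≤ ‖exp (2 * I * ζ * s)‖ + ‖(1 : ℂ)‖ := norm_sub_le _ _
    _ ≤ 2 := by rw [norm_one]; linarith [norm_exp_two_mul_I_mul_le_one hζ hs]

lemma norm_kappa_le {ζ : ℂ} (hζ : 0 ≤ ζ.im) {s : ℝ} (hs : 0 ≤ s) : ‖kappa ζ s‖ ≤ s := by
  by_cases hne : ζ = 0
  · simp [kappa, hne, abs_of_nonneg hs]
  have hderiv (t : ℝ) :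
      HasDerivAt (fun t : ℝ => exp (2 * I * ζ * t)) (2 * I * ζ * exp (2 * I * ζ * t)) t := by
    simpa [mul_comm] using ((hasDerivAt_id (t : ℂ)).const_mul (2 * I * ζ)).cexp.comp_ofReal
  have hmvt := norm_image_sub_le_of_norm_deriv_le_segment' (C := 2 * ‖ζ‖)
    (fun t _ => (hderiv t).hasDerivWithinAt) (fun t ht => ?_) s ⟨hs, le_rfl⟩
  · rw [kappa, if_neg hne, norm_div, norm_two_mul_I_mul, div_le_iff₀ (by positivity)]
    simpa [mul_comm] using hmvt
  · rw [norm_mul, norm_two_mul_I_mul]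
    exact mul_le_of_le_one_right (by positivity) (norm_exp_two_mul_I_mul_le_one hζ ht.1)

section Jost

variable {a b : ℝ} {V : ℝ → ℝ} {ζ : ℂ} {u : ℝ → ℂ}

lemma norm_integral_kappa_mul_le {y K : ℝ} (hyb : y ≤ b) (hV : IntervalIntegrable V volume y b)
    (hu : ContinuousOn u (Icc y b)) (hK : ∀ t ∈ Ioc y b, ‖kappa ζ (t - y)‖ ≤ K) :
    ‖∫ t in y..b, kappa ζ (t - y) * V t * u t‖ ≤ K * ∫ t in y..b, |V t| * ‖u t‖ := by
  rw [← intervalIntegral.integral_const_mul]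
  refine norm_integral_le_of_norm_le hyb (ae_of_all _ fun t ht => ?_)
    ((hV.abs.mul_continuousOn (uIcc_of_le hyb ▸ hu.norm)).const_mul K)
  rw [norm_mul, norm_mul, norm_real, Real.norm_eq_abs, mul_assoc]
  exact mul_le_mul_of_nonneg_right (hK t ht) (by positivity)

lemma norm_le_one_add_mul_integral_of_jost (hζ : 0 ≤ ζ.im) (hV : IntervalIntegrable V volume a b)
    (hcont : ContinuousOn u (Icc a b))
    (hu : ∀ x ∈ Icc a b, u x = 1 + ∫ t in x..b, kappa ζ (t - x) * V t * u t)
    {y : ℝ} (hy : y ∈ Icc a b) :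
    ‖u y‖ ≤ 1 + (b - a) * ∫ t in y..b, |V t| * ‖u t‖ := by
  have hsub : Icc y b ⊆ Icc a b := Icc_subset_Icc_left hy.1
  have hVy : IntervalIntegrable V volume y b :=
    hV.mono_set (by simpa only [uIcc_of_le hy.2, uIcc_of_le (hy.1.trans hy.2)] using hsub)
  calc ‖u y‖ ≤ ‖(1 : ℂ)‖ + ‖∫ t in y..b, kappa ζ (t - y) * V t * u t‖ := by
        rw [hu y hy]; exact norm_add_le _ _
    _ ≤ 1 + (b - a) * ∫ t in y..b, |V t| * ‖u t‖ := by
        rw [norm_one]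
        gcongr
        refine norm_integral_kappa_mul_le hy.2 hVy (hcont.mono hsub) fun t ht => ?_
        exact (norm_kappa_le hζ (sub_nonneg.2 ht.1.le)).trans (by linarith [ht.2, hy.1])

lemma norm_le_exp_of_jost (hζ : 0 ≤ ζ.im) (hV : IntervalIntegrable V volume a b)
    (hcont : ContinuousOn u (Icc a b))
    (hu : ∀ x ∈ Icc a b, u x = 1 + ∫ t in x..b, kappa ζ (t - x) * V t * u t)
    {x : ℝ} (hx : x ∈ Icc a b) :
    ‖u x‖ ≤ Real.exp ((b - a) * ∫ t in a..b, |V t|) := by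
  have hab : a ≤ b := hx.1.trans hx.2
  have hsub : Icc x b ⊆ Icc a b := Icc_subset_Icc_left hx.1
  have hVx : IntervalIntegrable V volume x b :=
    hV.mono_set (by simpa only [uIcc_of_le hx.2, uIcc_of_le hab] using hsub)
  calc ‖u x‖ ≤ Real.exp ((b - a) * ∫ t in x..b, |V t|) :=
        le_exp_mul_integral_of_le_one_add_mul_integral (u := fun t => ‖u t‖) hx.2
          (sub_nonneg.2 hab) hVx.abs
          (hVx.abs.mul_continuousOn (uIcc_of_le hx.2 ▸ (hcont.mono hsub).norm))
          (fun t _ => abs_nonneg _)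
          (fun y hy => norm_le_one_add_mul_integral_of_jost hζ hV hcont hu ⟨hx.1.trans hy.1, hy.2⟩)
    _ ≤ Real.exp ((b - a) * ∫ t in a..b, |V t|) := by
        gcongr
        exact integral_mono_interval hx.1 hx.2 le_rfl (ae_of_all _ fun t => abs_nonneg (V t))
          hV.abs

lemma norm_sub_one_le_of_jost (hab : a ≤ b) (hζ : 0 ≤ ζ.im) (hne : ζ ≠ 0)
    (hV : IntervalIntegrable V volume a b) (hcont : ContinuousOn u (Icc a b))
    (hu : ∀ x ∈ Icc a b, u x = 1 + ∫ t in x..b, kappa ζ (t - x) * V t * u t) :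
    ‖u a - 1‖ ≤ ((∫ t in a..b, |V t|) / ‖ζ‖) * Real.exp ((b - a) * ∫ t in a..b, |V t|) := by
  set E := Real.exp ((b - a) * ∫ t in a..b, |V t|)
  rw [hu a (left_mem_Icc.2 hab), add_sub_cancel_left]
  calc ‖∫ t in a..b, kappa ζ (t - a) * V t * u t‖ ≤ ‖ζ‖⁻¹ * ∫ t in a..b, |V t| * ‖u t‖ :=
        norm_integral_kappa_mul_le hab hV hcont
          fun t ht => norm_kappa_le_inv_norm hζ hne (sub_nonneg.2 ht.1.le)
    _ ≤ ‖ζ‖⁻¹ * ∫ t in a..b, |V t| * E := by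
        refine mul_le_mul_of_nonneg_left (integral_mono_on hab
          (hV.abs.mul_continuousOn (uIcc_of_le hab ▸ hcont.norm)) (hV.abs.mul_const E)
          fun t ht => ?_) (by positivity)
        exact mul_le_mul_of_nonneg_left (norm_le_exp_of_jost hζ hV hcont hu ht) (abs_nonneg _)
    _ = ((∫ t in a..b, |V t|) / ‖ζ‖) * E := by rw [intervalIntegral.integral_mul_const]; ring

end Jost

theorem statement8_general
    (a b : ℝ) (hab : a < b)
    (V : ℝ → ℝ) (hV : Integrable V)
    (B : ℝ → ℂ → ℂ)
    (hBcont : ∀ ζ : ℂ, 0 ≤ ζ.im → ContinuousOn (fun x => B x ζ) (Set.Iic b))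
    (hBeq : ∀ ζ : ℂ, 0 ≤ ζ.im → ∀ x ≤ b,
      B x ζ = 1 + ∫ t in x..b, kappa ζ (t - x) * (V t : ℂ) * B t ζ) :
    (∀ ζ : ℂ, 0 ≤ ζ.im → ζ ≠ 0 →
      ‖B a ζ - 1‖
        ≤ ((∫ t in a..b, |V t|) / ‖ζ‖)
            * Real.exp ((b - a) * ∫ t in a..b, |V t|)) ∧
    Tendsto (fun ζ => B a ζ)
      (comap (fun ζ : ℂ => ‖ζ‖) atTop ⊓ 𝓟 {ζ : ℂ | 0 ≤ ζ.im}) (nhds 1) := by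
  have hbound : ∀ ζ : ℂ, 0 ≤ ζ.im → ζ ≠ 0 → ‖B a ζ - 1‖
      ≤ ((∫ t in a..b, |V t|) / ‖ζ‖) * Real.exp ((b - a) * ∫ t in a..b, |V t|) :=
    fun ζ hζ hne => norm_sub_one_le_of_jost hab.le hζ hne hV.intervalIntegrable
      ((hBcont ζ hζ).mono Icc_subset_Iic_self) fun x hx => hBeq ζ hζ x hx.2
  refine ⟨hbound, ?_⟩
  set N := ∫ t in a..b, |V t|
  have hnorm : Tendsto (fun ζ : ℂ => ‖ζ‖)
      (comap (fun ζ : ℂ => ‖ζ‖) atTop ⊓ 𝓟 {ζ : ℂ | 0 ≤ ζ.im}) atTop :=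
    tendsto_comap.mono_left inf_le_left
  rw [tendsto_iff_norm_sub_tendsto_zero]
  refine squeeze_zero' (Eventually.of_forall fun _ => norm_nonneg _) ?_
    ((tendsto_const_nhds (x := N * Real.exp ((b - a) * N))).div_atTop hnorm)
  filter_upwards [mem_inf_of_right (mem_principal_self _), hnorm.eventually_gt_atTop 0]
    with ζ hζ hpos
  calc ‖B a ζ - 1‖ ≤ _ := hbound ζ hζ (norm_pos_iff.1 hpos)
    _ = N * Real.exp ((b - a) * N) / ‖ζ‖ := by ring

/-- For every `ζ ≠ 0` in the closed upper half-plane the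
solution `b(·,ζ)` of the Jost integral equation satisfies
`|b(a,ζ) − 1| ≤ (‖V‖₁/|ζ|) exp((b−a)‖V‖₁)`; in particular `b(a,ζ) → 1` as
`|ζ| → ∞` within the closed upper half-plane. -/
theorem statement8
    (a b : ℝ) (hab : a < b)
    (V : ℝ → ℝ) (hV : Integrable V)
    (hVsupp : ∀ x, x ∉ Set.Icc a b → V x = 0)
    (B : ℝ → ℂ → ℂ)
    (hBcont : ∀ ζ : ℂ, 0 ≤ ζ.im → ContinuousOn (fun x => B x ζ) (Set.Iic b))
    (hBeq : ∀ ζ : ℂ, 0 ≤ ζ.im → ∀ x ≤ b,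
      B x ζ = 1 + ∫ t in x..b, kappa ζ (t - x) * (V t : ℂ) * B t ζ) :
    (∀ ζ : ℂ, 0 ≤ ζ.im → ζ ≠ 0 →
      ‖B a ζ - 1‖
        ≤ ((∫ t in a..b, |V t|) / ‖ζ‖)
            * Real.exp ((b - a) * ∫ t in a..b, |V t|)) ∧
    Tendsto (fun ζ => B a ζ)
      (comap (fun ζ : ℂ => ‖ζ‖) atTop ⊓ 𝓟 {ζ : ℂ | 0 ≤ ζ.im}) (nhds 1) :=
  statement8_general a b hab V hV B hBcont hBeq
end
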